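/- arXiv:0706.3405 — 3 statements merged into one kernel-verified Lean document; each statement's English description precedes it below -/
import Mathlib

section
/- For any n ≥ 2 and d ≥ 2, f(n,d) ≤ min over 0 ≤ k ≤ n−2 of ( f(k,d) + f(n−k−1,d) ) + f(n,d−1), where f(n,d) is the maximum of τ over families of axis-parallel boxes in ℝ^d with independence number at most n, and f(0,d) = 0. -/
/-!
Sweep the hyperplane `x₀ = a` from left to right and stop at the first right endpoint `a` at
which the boxes ending at or before `a` contain `k + 1` pairwise disjoint members. The boxes
ending strictly before `a` then have `ν ≤ k`. The boxes starting strictly after `a` are disjoint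
from those `k + 1` boxes, so they have `ν ≤ n - k - 1`. The boxes meeting the hyperplane are
pierced by any piercing set of their sections, which are boxes in `ℝ^(d-1)`; disjoint sections
come from disjoint boxes, so the sections have `ν ≤ n`.

Since `fBox n d` is an `sSup` in `ℕ`, it is `0` when the piercing numbers are unbounded. When
they are bounded, so are those for `(k, d)`, `(n - k - 1, d)` and, by embedding `ℝ^(d-1)` as a
hyperplane of `ℝ^d`, those for `(n, d - 1)`.
-/

/-- A finite point set `S` pierces the family `F` if every member contains a point of `S`. -/
def Piercing {α : Type*} (S : Finset α) (F : Finset (Set α)) : Prop :=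
  ∀ B ∈ F, ∃ p ∈ S, p ∈ B

/-- The piercing (transversal) number τ of a finite family of sets. -/
noncomputable def tau {α : Type*} (F : Finset (Set α)) : ℕ :=
  sInf {n | ∃ S : Finset α, S.card = n ∧ Piercing S F}

/-- The independence number ν : the maximal number of pairwise disjoint members. -/
noncomputable def nu {α : Type*} (F : Finset (Set α)) : ℕ :=
  sSup {n | ∃ G ⊆ F, G.card = n ∧ (G : Set (Set α)).PairwiseDisjoint id}

/-- An axis-parallel box in ℝ^d : a product of d nonempty closed intervals. -/
def IsBox (d : ℕ) (B : Set (Fin d → ℝ)) : Prop :=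
  ∃ l u : Fin d → ℝ, l ≤ u ∧ B = Set.Icc l u

/-- `f n d` : the supremum of τ over finite families of boxes in ℝ^d with ν ≤ n. -/
noncomputable def fBox (n d : ℕ) : ℕ :=
  sSup {t | ∃ F : Finset (Set (Fin d → ℝ)),
    (∀ B ∈ F, IsBox d B) ∧ nu F ≤ n ∧ tau F = t}

open Set

section Transversals

variable {α β : Type*}

lemma bddAbove_card_pairwiseDisjoint (F : Finset (Set α)) :
    BddAbove {n | ∃ G ⊆ F, G.card = n ∧ (G : Set (Set α)).PairwiseDisjoint id} :=
  ⟨F.card, by rintro _ ⟨G, hG, rfl, -⟩; exact Finset.card_le_card hG⟩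

lemma card_le_nu {F G : Finset (Set α)} (hG : G ⊆ F)
    (hdisj : (G : Set (Set α)).PairwiseDisjoint id) : G.card ≤ nu F :=
  le_csSup (bddAbove_card_pairwiseDisjoint F) ⟨G, hG, rfl, hdisj⟩

lemma exists_pairwiseDisjoint_card_eq_nu (F : Finset (Set α)) :
    ∃ G ⊆ F, G.card = nu F ∧ (G : Set (Set α)).PairwiseDisjoint id := by
  refine Nat.sSup_mem ?_ (bddAbove_card_pairwiseDisjoint F)
  exact ⟨0, ∅, Finset.empty_subset F, rfl, by simp⟩

lemma nu_mono {F F' : Finset (Set α)} (h : F ⊆ F') : nu F ≤ nu F' := by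
  obtain ⟨G, hG, hcard, hdisj⟩ := exists_pairwiseDisjoint_card_eq_nu F
  exact hcard ▸ card_le_nu (hG.trans h) hdisj

lemma nu_empty : nu (∅ : Finset (Set α)) = 0 := by
  obtain ⟨G, hG, hcard, -⟩ := exists_pairwiseDisjoint_card_eq_nu (∅ : Finset (Set α))
  rw [← hcard, Finset.subset_empty.1 hG, Finset.card_empty]

lemma nu_add_nu_le {F F₁ F₂ : Finset (Set α)} (h₁ : F₁ ⊆ F) (h₂ : F₂ ⊆ F)
    (hne : ∀ B ∈ F₁, B.Nonempty) (hdisj : ∀ B ∈ F₁, ∀ C ∈ F₂, Disjoint B C) :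
    nu F₁ + nu F₂ ≤ nu F := by
  classical
  obtain ⟨G₁, hG₁, hcard₁, hdisj₁⟩ := exists_pairwiseDisjoint_card_eq_nu F₁
  obtain ⟨G₂, hG₂, hcard₂, hdisj₂⟩ := exists_pairwiseDisjoint_card_eq_nu F₂
  have hG : Disjoint G₁ G₂ := Finset.disjoint_left.2 fun B hB₁ hB₂ =>
    (hne B (hG₁ hB₁)).ne_empty (disjoint_self.1 (hdisj B (hG₁ hB₁) B (hG₂ hB₂)))
  rw [← hcard₁, ← hcard₂, ← Finset.card_union_of_disjoint hG]
  refine card_le_nu (Finset.union_subset (hG₁.trans h₁) (hG₂.trans h₂)) ?_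
  rw [Finset.coe_union]
  exact hdisj₁.union hdisj₂ fun B hB C hC _ => hdisj B (hG₁ hB) C (hG₂ hC)

lemma nu_image_le [DecidableEq (Set β)] (F : Finset (Set α)) (φ : Set α → Set β)
    (h : ∀ B ∈ F, ∀ C ∈ F, Disjoint (φ B) (φ C) → Disjoint B C) :
    nu (F.image φ) ≤ nu F := by
  obtain ⟨G, hG, hcard, hdisj⟩ := exists_pairwiseDisjoint_card_eq_nu (F.image φ)
  choose! g hgF hφg using fun C (hC : C ∈ F.image φ) => Finset.mem_image.1 hC
  have hinj : Set.InjOn g G := fun C hC C' hC' hgC => by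
    rw [← hφg C (hG hC), ← hφg C' (hG hC'), hgC]
  rw [← hcard, ← Finset.card_image_of_injOn hinj]
  refine card_le_nu (fun B hB => ?_) ?_
  · obtain ⟨C, hC, rfl⟩ := Finset.mem_image.1 hB
    exact hgF C (hG hC)
  · rw [Finset.coe_image]
    rintro _ ⟨C, hC, rfl⟩ _ ⟨C', hC', rfl⟩ hne
    show Disjoint (g C) (g C')
    refine h _ (hgF C (hG hC)) _ (hgF C' (hG hC')) ?_
    rw [hφg C (hG hC), hφg C' (hG hC')]
    exact hdisj hC hC' fun hCC' => hne (hCC' ▸ rfl)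

lemma exists_threshold_nu_filter (F : Finset (Set α)) (key : Set α → ℝ) {k : ℕ}
    (hk : k < nu F) :
    ∃ a, nu (F.filter (key · < a)) ≤ k ∧ k < nu (F.filter (key · ≤ a)) := by
  classical
  have hne : ∀ G : Finset (Set α), k < nu G → G.Nonempty := fun G hG =>
    Finset.nonempty_iff_ne_empty.2 fun h => by simp [h, nu_empty] at hG
  set T := F.filter fun B => k < nu (F.filter (key · ≤ key B))
  obtain ⟨B, hB, hBmax⟩ := F.exists_max_image key (hne F hk)
  have hT : T.Nonempty := ⟨B, Finset.mem_filter.2 ⟨hB, by rwa [Finset.filter_true_of_mem hBmax]⟩⟩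
  obtain ⟨B₀, hB₀, hB₀min⟩ := T.exists_min_image key hT
  refine ⟨key B₀, not_lt.1 fun hlt => ?_, (Finset.mem_filter.1 hB₀).2⟩
  obtain ⟨B₁, hB₁, hB₁max⟩ := (F.filter (key · < key B₀)).exists_max_image key (hne _ hlt)
  have hsub : F.filter (key · < key B₀) ⊆ F.filter (key · ≤ key B₁) := fun C hC =>
    Finset.mem_filter.2 ⟨Finset.mem_of_mem_filter C hC, hB₁max C hC⟩
  have hB₁T : B₁ ∈ T :=
    Finset.mem_filter.2 ⟨Finset.mem_of_mem_filter B₁ hB₁, hlt.trans_le (nu_mono hsub)⟩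
  exact not_le.2 (Finset.mem_filter.1 hB₁).2 (hB₀min B₁ hB₁T)

lemma tau_le_card {F : Finset (Set α)} {S : Finset α} (hS : Piercing S F) : tau F ≤ S.card :=
  Nat.sInf_le ⟨S, rfl, hS⟩

lemma exists_piercing_card_eq_tau {F : Finset (Set α)} (hF : ∀ B ∈ F, B.Nonempty) :
    ∃ S : Finset α, S.card = tau F ∧ Piercing S F := by
  classical
  refine Nat.sInf_mem (s := {n | ∃ S : Finset α, S.card = n ∧ Piercing S F})
    ⟨_, F.attach.image fun B => (hF B.1 B.2).some, rfl, fun B hB => ?_⟩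
  exact ⟨_, Finset.mem_image_of_mem _ (Finset.mem_attach _ ⟨B, hB⟩), (hF B hB).some_mem⟩

lemma tau_le_of_mapsTo {F : Finset (Set α)} {G : Finset (Set β)} (hG : ∀ C ∈ G, C.Nonempty)
    (f : β → α) (h : ∀ B ∈ F, ∃ C ∈ G, MapsTo f C B) : tau F ≤ tau G := by
  classical
  obtain ⟨S, hcard, hS⟩ := exists_piercing_card_eq_tau hG
  calc tau F ≤ (S.image f).card := tau_le_card fun B hB => by
        obtain ⟨C, hC, hfC⟩ := h B hB
        obtain ⟨p, hp, hpC⟩ := hS C hC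
        exact ⟨f p, Finset.mem_image_of_mem f hp, hfC hpC⟩
    _ ≤ tau G := hcard ▸ Finset.card_image_le

lemma tau_union_le [DecidableEq (Set α)] {F G : Finset (Set α)}
    (hne : ∀ B ∈ F ∪ G, B.Nonempty) : tau (F ∪ G) ≤ tau F + tau G := by
  classical
  obtain ⟨S, hS, hSF⟩ :=
    exists_piercing_card_eq_tau fun B hB => hne B (Finset.mem_union_left G hB)
  obtain ⟨T, hT, hTG⟩ :=
    exists_piercing_card_eq_tau fun B hB => hne B (Finset.mem_union_right F hB)
  calc tau (F ∪ G) ≤ (S ∪ T).card := tau_le_card fun B hB => by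
        rcases Finset.mem_union.1 hB with hB | hB
        · obtain ⟨p, hp, hpB⟩ := hSF B hB
          exact ⟨p, Finset.mem_union_left T hp, hpB⟩
        · obtain ⟨p, hp, hpB⟩ := hTG B hB
          exact ⟨p, Finset.mem_union_right S hp, hpB⟩
    _ ≤ tau F + tau G := hS ▸ hT ▸ Finset.card_union_le S T

end Transversals

section Boxes

variable {d e : ℕ}

lemma IsBox.nonempty {B : Set (Fin d → ℝ)} (hB : IsBox d B) : B.Nonempty := by
  obtain ⟨l, u, hlu, rfl⟩ := hB
  exact nonempty_Icc.2 hlu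

lemma Icc_disjoint_Icc_of_apply_lt {l u l' u' : Fin d → ℝ} {i : Fin d} (h : u i < l' i) :
    Disjoint (Icc l u) (Icc l' u') :=
  Set.disjoint_left.2 fun _ hx hx' => not_le.2 (h.trans_le (hx'.1 i)) (hx.2 i)

lemma exists_mem_Icc_apply_eq {l u : Fin (e + 1) → ℝ} (hlu : l ≤ u) {i : Fin (e + 1)} {a : ℝ}
    (ha : a ∈ Icc (l i) (u i)) : ∃ x ∈ Icc l u, x i = a :=
  ⟨i.insertNth a (i.removeNth l),
    Fin.insertNth_mem_Icc.2 ⟨ha, le_rfl, fun j => hlu (i.succAbove j)⟩, Fin.insertNth_apply_same ..⟩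

def slice (i : Fin (e + 1)) (a : ℝ) (B : Set (Fin (e + 1) → ℝ)) : Set (Fin e → ℝ) :=
  {y | i.insertNth a y ∈ B}

lemma slice_Icc {l u : Fin (e + 1) → ℝ} {i : Fin (e + 1)} {a : ℝ} (ha : a ∈ Icc (l i) (u i)) :
    slice i a (Icc l u) = Icc (i.removeNth l) (i.removeNth u) :=
  Fin.preimage_insertNth_Icc_of_mem ha

lemma isBox_slice {B : Set (Fin (e + 1) → ℝ)} (hB : IsBox (e + 1) B)
    {i : Fin (e + 1)} {a : ℝ} (ha : ∃ x ∈ B, x i = a) : IsBox e (slice i a B) := by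
  obtain ⟨l, u, hlu, rfl⟩ := hB
  obtain ⟨x, hx, rfl⟩ := ha
  exact ⟨_, _, fun j => hlu _, slice_Icc ⟨hx.1 i, hx.2 i⟩⟩

lemma disjoint_of_disjoint_slice {B C : Set (Fin (e + 1) → ℝ)}
    (hB : IsBox (e + 1) B) (hC : IsBox (e + 1) C) {i : Fin (e + 1)} {a : ℝ}
    (haB : ∃ x ∈ B, x i = a) (haC : ∃ x ∈ C, x i = a)
    (h : Disjoint (slice i a B) (slice i a C)) : Disjoint B C := by
  obtain ⟨l, u, -, rfl⟩ := hB
  obtain ⟨l', u', -, rfl⟩ := hC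
  obtain ⟨x, hx, rfl⟩ := haB
  obtain ⟨x', hx', hx'i⟩ := haC
  rw [slice_Icc ⟨hx.1 i, hx.2 i⟩, slice_Icc (hx'i ▸ ⟨hx'.1 i, hx'.2 i⟩)] at h
  exact Set.disjoint_left.2 fun y hy hy' => (Set.disjoint_left.1 h) (a := i.removeNth y)
    ⟨fun j => hy.1 _, fun j => hy.2 _⟩ ⟨fun j => hy'.1 _, fun j => hy'.2 _⟩

section Slices

variable {M : Finset (Set (Fin (e + 1) → ℝ))} {i : Fin (e + 1)} {a : ℝ}

lemma nu_image_slice_le (hM : ∀ B ∈ M, IsBox (e + 1) B ∧ ∃ x ∈ B, x i = a) :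
    nu (M.image (slice i a)) ≤ nu M := by
  classical
  exact nu_image_le M _ fun B hB C hC =>
    disjoint_of_disjoint_slice (hM B hB).1 (hM C hC).1 (hM B hB).2 (hM C hC).2

lemma tau_le_tau_image_slice (hM : ∀ B ∈ M, IsBox (e + 1) B ∧ ∃ x ∈ B, x i = a) :
    tau M ≤ tau (M.image (slice i a)) := by
  classical
  refine tau_le_of_mapsTo ?_ (fun y => i.insertNth a y) fun B hB =>
    ⟨slice i a B, Finset.mem_image_of_mem _ hB, fun _ hy => hy⟩
  intro C hC
  obtain ⟨B, hB, rfl⟩ := Finset.mem_image.1 hC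
  exact (isBox_slice (hM B hB).1 (hM B hB).2).nonempty

end Slices

lemma exists_lift_boxes_succ (F : Finset (Set (Fin e → ℝ))) (hF : ∀ B ∈ F, IsBox e B) :
    ∃ F' : Finset (Set (Fin (e + 1) → ℝ)),
      (∀ B ∈ F', IsBox (e + 1) B) ∧ nu F' ≤ nu F ∧ tau F ≤ tau F' := by
  classical
  choose! l u hlu using hF
  set lift : Set (Fin e → ℝ) → Set (Fin (e + 1) → ℝ) :=
    fun B => Icc (Fin.insertNth 0 0 (l B)) (Fin.insertNth 0 0 (u B))
  have hbox : ∀ B' ∈ F.image lift, IsBox (e + 1) B' := by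
    intro _ hB'
    obtain ⟨B, hB, rfl⟩ := Finset.mem_image.1 hB'
    refine ⟨Fin.insertNth 0 0 (l B), Fin.insertNth 0 0 (u B), ?_, rfl⟩
    exact Fin.insertNth_le_iff.2 ⟨le_rfl, fun j => by simpa using (hlu B hB).1 j⟩
  have hslice : ∀ B ∈ F, slice 0 0 (lift B) = B := fun B hB =>
    (slice_Icc (by simp)).trans (by simpa using (hlu B hB).2.symm)
  refine ⟨F.image lift, hbox, nu_image_le F lift fun B hB C hC h => ?_,
    tau_le_of_mapsTo (fun B hB => (hbox B hB).nonempty) (Fin.removeNth 0) fun B hB =>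
      ⟨lift B, Finset.mem_image_of_mem _ hB, fun x hx => ?_⟩⟩
  · exact hslice B hB ▸ hslice C hC ▸ h.preimage _
  · suffices Fin.removeNth 0 x ∈ Icc (l B) (u B) by rwa [← (hlu B hB).2] at this
    rw [← Fin.insertNth_self_removeNth 0 x, Fin.insertNth_mem_Icc] at hx
    simpa only [Fin.insertNth_apply_succAbove] using hx.2

end Boxes

theorem exists_hyperplane_split {e k : ℕ} {F : Finset (Set (Fin (e + 1) → ℝ))}
    (hF : ∀ B ∈ F, IsBox (e + 1) B) (hk : k < nu F) :
    ∃ (L R : Finset (Set (Fin (e + 1) → ℝ))) (M : Finset (Set (Fin e → ℝ))),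
      L ⊆ F ∧ R ⊆ F ∧ (∀ B ∈ M, IsBox e B) ∧
      nu L ≤ k ∧ k + 1 + nu R ≤ nu F ∧ nu M ≤ nu F ∧ tau F ≤ tau L + tau R + tau M := by
  classical
  have hne : ∀ B ∈ F, B.Nonempty := fun B hB => (hF B hB).nonempty
  choose! l u hlu using hF
  obtain ⟨a, hL, hle⟩ := exists_threshold_nu_filter F (fun B => u B 0) hk
  set L := F.filter (u · 0 < a)
  set R := F.filter (a < l · 0)
  set M := F.filter fun B => l B 0 ≤ a ∧ a ≤ u B 0
  have hM : ∀ B ∈ M, IsBox (e + 1) B ∧ ∃ x ∈ B, x 0 = a := fun B hB => by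
    obtain ⟨hBF, ha⟩ := Finset.mem_filter.1 hB
    exact ⟨⟨l B, u B, hlu B hBF⟩, (hlu B hBF).2 ▸ exists_mem_Icc_apply_eq (hlu B hBF).1 ha⟩
  have hcover : F = L ∪ R ∪ M := by
    ext B
    simp only [L, R, M, Finset.mem_union, Finset.mem_filter]
    refine ⟨fun hB => ?_, by rintro ((⟨hB, -⟩ | ⟨hB, -⟩) | ⟨hB, -⟩) <;> exact hB⟩
    rcases lt_or_ge (u B 0) a with h₁ | h₁
    · exact Or.inl (Or.inl ⟨hB, h₁⟩)
    rcases lt_or_ge a (l B 0) with h₂ | h₂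
    · exact Or.inl (Or.inr ⟨hB, h₂⟩)
    · exact Or.inr ⟨hB, h₂, h₁⟩
  have hR : nu (F.filter (u · 0 ≤ a)) + nu R ≤ nu F := by
    refine nu_add_nu_le (Finset.filter_subset _ F) (Finset.filter_subset _ F)
      (fun B hB => hne B (Finset.mem_of_mem_filter B hB)) fun B hB C hC => ?_
    rw [Finset.mem_filter] at hB hC
    rw [(hlu B hB.1).2, (hlu C hC.1).2]
    exact Icc_disjoint_Icc_of_apply_lt (hB.2.trans_lt hC.2)
  refine ⟨L, R, M.image (slice 0 a), Finset.filter_subset _ _, Finset.filter_subset _ _,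
    fun C hC => ?_, hL, by omega,
    (nu_image_slice_le hM).trans (nu_mono (Finset.filter_subset _ _)), ?_⟩
  · obtain ⟨B, hB, rfl⟩ := Finset.mem_image.1 hC
    exact isBox_slice (hM B hB).1 (hM B hB).2
  · have hne' : ∀ B ∈ L ∪ R ∪ M, B.Nonempty := hcover ▸ hne
    calc tau F = tau (L ∪ R ∪ M) := by rw [← hcover]
      _ ≤ tau (L ∪ R) + tau M := tau_union_le hne'
      _ ≤ tau L + tau R + tau (M.image (slice 0 a)) :=
        add_le_add (tau_union_le fun B hB => hne' B (Finset.mem_union_left M hB))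
          (tau_le_tau_image_slice hM)

def boxTauSet (n d : ℕ) : Set ℕ :=
  {t | ∃ F : Finset (Set (Fin d → ℝ)), (∀ B ∈ F, IsBox d B) ∧ nu F ≤ n ∧ tau F = t}

lemma tau_le_fBox {n d : ℕ} (hbdd : BddAbove (boxTauSet n d)) {F : Finset (Set (Fin d → ℝ))}
    (hF : ∀ B ∈ F, IsBox d B) (hnu : nu F ≤ n) : tau F ≤ fBox n d :=
  le_csSup hbdd ⟨F, hF, hnu, rfl⟩

lemma BddAbove.boxTauSet_of_le {m n d : ℕ} (hbdd : BddAbove (boxTauSet n d)) (h : m ≤ n) :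
    BddAbove (boxTauSet m d) :=
  hbdd.mono <| by
    rintro _ ⟨F, hF, hnu, rfl⟩
    exact ⟨F, hF, hnu.trans h, rfl⟩

lemma BddAbove.boxTauSet_of_succ {n e : ℕ} (hbdd : BddAbove (boxTauSet n (e + 1))) :
    BddAbove (boxTauSet n e) := by
  obtain ⟨b, hb⟩ := hbdd
  refine ⟨b, ?_⟩
  rintro _ ⟨F, hF, hnu, rfl⟩
  obtain ⟨F', hF', hnu', htau⟩ := exists_lift_boxes_succ F hF
  exact htau.trans (hb ⟨F', hF', hnu'.trans hnu, rfl⟩)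

theorem fBox_recursion_general (n d : ℕ) (k : ℕ) (hk : k ≤ n - 2) :
    fBox n d ≤ fBox k d + fBox (n - k - 1) d + fBox n (d - 1) := by
  obtain _ | e := d
  · exact Nat.le_add_left _ _
  rw [Nat.add_sub_cancel]
  by_cases hbdd : BddAbove (boxTauSet n (e + 1))
  swap
  · exact (Nat.sSup_of_not_bddAbove hbdd).trans_le (Nat.zero_le _)
  refine csSup_le' ?_
  rintro _ ⟨F, hF, hnu, rfl⟩
  rcases le_or_gt (nu F) k with hFk | hkF
  · exact (tau_le_fBox (hbdd.boxTauSet_of_le (by omega)) hF hFk).trans (by omega)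
  obtain ⟨L, R, M, hLF, hRF, hM, hL, hR, hMnu, htau⟩ := exists_hyperplane_split hF hkF
  refine htau.trans (add_le_add (add_le_add ?_ ?_) ?_)
  · exact tau_le_fBox (hbdd.boxTauSet_of_le (by omega)) (fun B hB => hF B (hLF hB)) hL
  · exact tau_le_fBox (hbdd.boxTauSet_of_le (by omega)) (fun B hB => hF B (hRF hB)) (by omega)
  · exact tau_le_fBox hbdd.boxTauSet_of_succ hM (hMnu.trans hnu)

/-- Proposition 1 (Fon-Der-Flaass–Kostochka): for n ≥ 2, d ≥ 2 and every
0 ≤ k ≤ n-2, f(n,d) ≤ f(k,d) + f(n-k-1,d) + f(n,d-1). -/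
theorem fBox_recursion (n d : ℕ) (hn : 2 ≤ n) (hd : 2 ≤ d)
    (k : ℕ) (hk : k ≤ n - 2) :
    fBox n d ≤ fBox k d + fBox (n - k - 1) d + fBox n (d - 1) :=
  fBox_recursion_general n d k hk
end

section
/- Define h(n) = n·log_{9^{1/3}}(n) + n for real n ≥ 1. If a function f : ℕ → ℕ satisfies f(1) ≤ 1, f(2) ≤ 3, and f(n) ≤ 3·f(⌈(n−2)/3⌉) + ⌊3n/2⌋ for all n ≥ 3, then f(n) ≤ h(n) for all n ≥ 1. -/
/-!
The function h satisfies the recursion h(x) = 3·h(x/3) + 3x/2 exactly and is increasing on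
[1, ∞). Since ⌈(n - 2)/3⌉ = ⌊n/3⌋ ≤ n/3 and ⌊3n/2⌋ ≤ 3n/2, strong induction on n carries the
bound through the recursion; the base cases are h(1) = 1 and h(2) = 2 + 6 log 2 / log 9 ≥ 3,
i.e. 9 ≤ 2⁶.
-/

/-- h(x) = x·log_{9^{1/3}} x + x, where log_{9^{1/3}} x = 3 ln x / ln 9. -/
noncomputable def hFun (x : ℝ) : ℝ := x * (3 * Real.log x / Real.log 9) + x

open Real Set

lemma log_nine_pos : 0 < log 9 := log_pos (by norm_num)

lemma hFun_eq_mul_log_add (x : ℝ) : hFun x = 3 / log 9 * (x * log x) + x := by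
  rw [hFun]
  ring

lemma hFun_monotoneOn : MonotoneOn hFun (Ici (exp (-1))) := by
  intro x hx y hy hxy
  have := mul_log_strictMonoOn.monotoneOn hx hy hxy
  rw [hFun_eq_mul_log_add, hFun_eq_mul_log_add]
  gcongr

lemma hFun_natCast_div_le_hFun_div {m k : ℕ} (h : 1 ≤ m / k) :
    hFun (m / k : ℕ) ≤ hFun (m / k : ℝ) := by
  have hone : (1 : ℝ) ≤ (m / k : ℕ) := by exact_mod_cast h
  have hexp : exp (-1) ≤ 1 := exp_le_one_iff.mpr (by norm_num)
  exact hFun_monotoneOn (hexp.trans hone) (hexp.trans (hone.trans Nat.cast_div_le))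
    Nat.cast_div_le

lemma hFun_eq_three_mul_hFun_div_three_add (x : ℝ) :
    hFun x = 3 * hFun (x / 3) + 3 / 2 * x := by
  rcases eq_or_ne x 0 with rfl | hx
  · simp [hFun]
  have hlog9 : log 9 = 2 * log 3 := by
    rw [show (9 : ℝ) = 3 ^ 2 by norm_num, log_pow, Nat.cast_ofNat]
  have hlog3 : 0 < log 3 := log_pos (by norm_num)
  rw [hFun, hFun, log_div hx three_ne_zero, hlog9]
  field_simp
  ring

lemma hFun_one : hFun 1 = 1 := by simp [hFun]

lemma three_le_hFun_two : 3 ≤ hFun 2 := by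
  have hlog : log 9 ≤ 6 * log 2 := by
    rw [show (6 : ℝ) = (6 : ℕ) by norm_num, ← log_pow]
    exact log_le_log (by norm_num) (by norm_num)
  have : 1 ≤ 2 * (3 * log 2) / log 9 := (one_le_div log_nine_pos).mpr (by linarith)
  rw [hFun, mul_div_assoc']
  linarith

/-- The numerical induction behind Proposition 3: if f(1) ≤ 1, f(2) ≤ 3 and
f(n) ≤ 3·f(⌈(n-2)/3⌉) + ⌊3n/2⌋ for all n ≥ 3, then f(n) ≤ h(n) for n ≥ 1. -/
theorem le_hFun_of_recursion (f : ℕ → ℕ)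
    (h1 : f 1 ≤ 1) (h2 : f 2 ≤ 3)
    (hrec : ∀ n, 3 ≤ n → f n ≤ 3 * f ((n - 2 + 2) / 3) + 3 * n / 2) :
    ∀ n, 1 ≤ n → (f n : ℝ) ≤ hFun n := by
  intro n
  induction n using Nat.strong_induction_on with
  | _ n ih =>
  intro hn
  obtain rfl | rfl | hn3 : n = 1 ∨ n = 2 ∨ 3 ≤ n := by omega
  · simpa [hFun_one] using h1
  · exact (Nat.cast_le.mpr h2).trans (by simpa using three_le_hFun_two)
  have hstep : (f n : ℝ) ≤ 3 * f (n / 3) + ((3 * n / 2 : ℕ) : ℝ) := by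
    have := hrec n hn3
    rw [show (n - 2 + 2) / 3 = n / 3 by omega] at this
    exact_mod_cast this
  have hfloor : ((3 * n / 2 : ℕ) : ℝ) ≤ 3 / 2 * n := by
    have := Nat.cast_div_le (α := ℝ) (m := 3 * n) (n := 2)
    push_cast at this
    linarith
  calc (f n : ℝ) ≤ 3 * f (n / 3) + 3 / 2 * n := by linarith
    _ ≤ 3 * hFun (n / 3 : ℝ) + 3 / 2 * n := by
      gcongr
      exact (ih _ (by omega) (by omega)).trans (hFun_natCast_div_le_hFun_div (by omega))
    _ = hFun n := (hFun_eq_three_mul_hFun_div_three_add _).symm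
end

section
/- Suppose g : ℕ × ℕ → ℝ satisfies g(n,2) ≤ n·log_{9^{1/3}}(n) + n for all n ≥ 1 and g(n,d) ≤ n + log₂(n)·g(n,d−1) for all n ≥ 1, d ≥ 3. Then for each fixed d ≥ 2 there is a constant C_d with g(n,d) ≤ log_{9^{1/3}}(2)·n·(log₂ n)^{d−1} + C_d·n·(log₂ n)^{d−2}·max(1, log₂ log₂ n)⁰ for all n ≥ 2; in particular g(n,d) = (log_{9^{1/3}} 2 + o(1))·n·(log₂ n)^{d−1} as n → ∞. -/
/-!
Since `log_{9^{1/3}} n = log_{9^{1/3}} 2 · log₂ n`, the planar bound reads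
`g(n,2) ≤ L n X + n` with `L = log_{9^{1/3}} 2`, `X = log₂ n ≥ 1`. Each use of the recursion
multiplies the bound by `X` and adds `n ≤ n X^{d-2}`, so `g(n,d) ≤ L n X^{d-1} + (d-1) n X^{d-2}`.
The error term is at most `ε n X^{d-1}` as soon as `X ≥ (d-1)/ε`.
-/

open Filter Real

lemma le_mul_pow_add_of_le_add_mul {u : ℕ → ℝ} {a X L : ℝ} (ha : 0 ≤ a) (hX : 1 ≤ X)
    (h2 : u 2 ≤ L * a * X + a) (hsucc : ∀ k : ℕ, u (k + 3) ≤ a + X * u (k + 2)) (k : ℕ) :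
    u (k + 2) ≤ L * a * X ^ (k + 1) + (k + 1) * a * X ^ k := by
  induction k with
  | zero => simpa using h2
  | succ k ih =>
    have ha_le : a ≤ a * X ^ (k + 1) := le_mul_of_one_le_right ha (one_le_pow₀ hX)
    calc u (k + 1 + 2) ≤ a + X * u (k + 2) := hsucc k
      _ ≤ a + X * (L * a * X ^ (k + 1) + (k + 1) * a * X ^ k) := by gcongr
      _ = L * a * X ^ (k + 2) + (k + 1) * a * X ^ (k + 1) + a := by ring
      _ ≤ L * a * X ^ (k + 2) + ((k + 1 : ℕ) + 1) * a * X ^ (k + 1) := by push_cast; linarith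

lemma one_le_logb_two_natCast {n : ℕ} (hn : 2 ≤ n) : 1 ≤ logb 2 (n : ℝ) := by
  rw [le_logb_iff_rpow_le one_lt_two (by positivity), rpow_one]
  exact_mod_cast hn

lemma tendsto_logb_two_natCast_atTop : Tendsto (fun n : ℕ => logb 2 (n : ℝ)) atTop atTop :=
  (tendsto_logb_atTop one_lt_two).comp tendsto_natCast_atTop_atTop

lemma add_mul_pow_le_of_le_mul {L C ε a X : ℝ} (ha : 0 ≤ a) (hX : 0 ≤ X) (hC : C ≤ ε * X)
    (k : ℕ) : L * a * X ^ (k + 1) + C * a * X ^ k ≤ (L + ε) * a * X ^ (k + 1) := by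
  have : C * (a * X ^ k) ≤ ε * X * (a * X ^ k) := by gcongr
  linarith [show (L + ε) * a * X ^ (k + 1) = L * a * X ^ (k + 1) + ε * X * (a * X ^ k) by ring]

/-- The analytic induction on the dimension: if g(n,2) ≤ n·log_{9^{1/3}} n + n
for n ≥ 1 and g(n,d) ≤ n + log₂ n · g(n,d-1) for n ≥ 1, d ≥ 3, then for each
fixed d ≥ 2 one has g(n,d) ≤ log_{9^{1/3}} 2 · n·(log₂ n)^{d-1} + C·n·(log₂ n)^{d-2}
for some constant C and all n ≥ 2; in particular
g(n,d) ≤ (log_{9^{1/3}} 2 + o(1))·n·(log₂ n)^{d-1}. -/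
theorem dim_induction (g : ℕ → ℕ → ℝ)
    (h2 : ∀ n : ℕ, 1 ≤ n →
      g n 2 ≤ n * Real.logb ((9 : ℝ) ^ ((1 : ℝ) / 3)) n + n)
    (hd : ∀ n d : ℕ, 1 ≤ n → 3 ≤ d →
      g n d ≤ n + Real.logb 2 n * g n (d - 1)) :
    ∀ d : ℕ, 2 ≤ d →
      (∃ C : ℝ, ∀ n : ℕ, 2 ≤ n →
        g n d ≤ Real.logb ((9 : ℝ) ^ ((1 : ℝ) / 3)) 2 * n * (Real.logb 2 n) ^ (d - 1)
          + C * n * (Real.logb 2 n) ^ (d - 2)) ∧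
      (∀ ε : ℝ, 0 < ε → ∃ N : ℕ, ∀ n : ℕ, N ≤ n →
        g n d ≤ (Real.logb ((9 : ℝ) ^ ((1 : ℝ) / 3)) 2 + ε) * n *
          (Real.logb 2 n) ^ (d - 1)) := by
  intro d hd2
  obtain ⟨k, rfl⟩ := Nat.exists_eq_add_of_le' hd2
  simp only [Nat.add_sub_cancel, show k + 2 - 1 = k + 1 by omega]
  set L := logb ((9 : ℝ) ^ ((1 : ℝ) / 3)) 2
  have hbound (n : ℕ) (hn : 2 ≤ n) :
      g n (k + 2) ≤ L * n * logb 2 n ^ (k + 1) + (k + 1) * n * logb 2 n ^ k := by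
    refine le_mul_pow_add_of_le_add_mul (u := g n) n.cast_nonneg (one_le_logb_two_natCast hn) ?_
      (fun j => hd n (j + 3) (by omega) (by omega)) k
    have hbase : logb ((9 : ℝ) ^ ((1 : ℝ) / 3)) n = L * logb 2 n :=
      (mul_logb two_ne_zero (by norm_num) (by norm_num)).symm
    linarith [hbase ▸ h2 n (by omega)]
  refine ⟨⟨k + 1, hbound⟩, fun ε hε => ?_⟩
  obtain ⟨N, hN⟩ := eventually_atTop.mp
    (tendsto_logb_two_natCast_atTop.eventually_ge_atTop ((k + 1) / ε))
  refine ⟨max N 2, fun n hn => (hbound n (le_of_max_le_right hn)).trans ?_⟩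
  have hX := one_le_logb_two_natCast (le_of_max_le_right hn)
  refine add_mul_pow_le_of_le_mul n.cast_nonneg (by linarith) ?_ k
  rw [← div_le_iff₀' hε]
  exact hN n (le_of_max_le_left hn)
end
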